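/- Let 𝔛 ⊆ 2^{[n]}, X ⊆ [n] with |X| ≥ 2, and i_α ∈ X. If e_{X∖i_ℓ} ∈ ℑ(𝔛) for every i_ℓ ∈ X∖{i_α}, then e_{X∖i_α} ∈ ℑ(𝔛). -/

import Mathlib

/-! Pick `j ∈ X \ {i}`. Since `e_X = ± e_j e_{X \ j}`, the monomial `e_X` lies in `ℑ(𝔛)`.
The ideal is closed under `∂`: `∂` is a derivation twisted by the grade involution, which
preserves the homogeneous generators `∂ e_Y`, and `∂ (∂ e_Y) = 0`. Hence
`∂ e_X = ∑_{k ∈ X} ± e_{X \ k}` lies in `ℑ(𝔛)`; every summand with `k ≠ i` does by hypothesis,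
so the remaining one, `± e_{X \ i}`, does too. -/

open ExteriorAlgebra

/-- The Grassmann algebra over `K` on generators `e 0, ..., e (n-1)`. -/
abbrev Grass (K : Type) [Field K] (n : ℕ) := ExteriorAlgebra K (Fin n → K)

/-- The generator `e i`. -/
noncomputable def gen (K : Type) [Field K] (n : ℕ) (i : Fin n) : Grass K n :=
  ExteriorAlgebra.ι K (Pi.single i 1)

/-- The monomial associated to a list of indices. -/
noncomputable def monList (K : Type) [Field K] (n : ℕ) (l : List (Fin n)) : Grass K n :=
  (l.map (gen K n)).prod

/-- The monomial `e_X` of a subset `X ⊆ [n]`, factors in increasing order. -/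
noncomputable def mon (K : Type) [Field K] (n : ℕ) (X : Finset (Fin n)) : Grass K n :=
  monList K n (X.sort (· ≤ ·))

/-- The degree `-1` antiderivation `∂` on the Grassmann algebra with `∂ (e i) = 1`
(left contraction with the covector sending each generator to `1`). -/
noncomputable def bd (K : Type) [Field K] (n : ℕ) : Grass K n →ₗ[K] Grass K n :=
  CliffordAlgebra.contractLeft (∑ i : Fin n, LinearMap.proj i)

/-- The two-sided ideal `ℑ(𝔛)` generated by the differentials `∂ e_Y`, `Y ∈ 𝔛`. -/
noncomputable def OSIdeal (K : Type) [Field K] (n : ℕ) (X : Set (Finset (Fin n))) :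
    TwoSidedIdeal (Grass K n) :=
  TwoSidedIdeal.span ((fun Y => bd K n (mon K n Y)) '' X)

namespace CliffordAlgebra

variable {R M : Type*} [CommRing R] [AddCommGroup M] [Module R M] {Q : QuadraticForm R M}
  (d : Module.Dual R M)

theorem contractLeft_mul (x y : CliffordAlgebra Q) :
    contractLeft d (x * y) = contractLeft d x * y + involute x * contractLeft d y := by
  induction x using CliffordAlgebra.left_induction with
  | algebraMap r =>
    rw [contractLeft_algebraMap_mul, contractLeft_algebraMap, involute.commutes, zero_mul,
      zero_add]
  | add x₁ x₂ h₁ h₂ =>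
    rw [add_mul, map_add, map_add, map_add, h₁, h₂]
    noncomm_ring
  | ι_mul x m h =>
    rw [mul_assoc, contractLeft_ι_mul, contractLeft_ι_mul, h, map_mul, involute_ι, sub_mul,
      smul_mul_assoc]
    noncomm_ring

theorem contractLeft_involute (x : CliffordAlgebra Q) :
    contractLeft d (involute x) = -involute (contractLeft d x) := by
  induction x using CliffordAlgebra.left_induction with
  | algebraMap r => simp
  | add x₁ x₂ h₁ h₂ => rw [map_add, map_add, map_add, h₁, h₂, map_add, neg_add]
  | ι_mul x m h =>
    rw [map_mul, involute_ι, neg_mul, map_neg, contractLeft_ι_mul, h, contractLeft_ι_mul,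
      map_sub, map_smul, map_mul, involute_ι]
    noncomm_ring

end CliffordAlgebra

namespace TwoSidedIdeal

variable {A : Type*} [Ring A]

theorem smul_mem_of_mem {K : Type*} [CommSemiring K] [Algebra K A] (I : TwoSidedIdeal A)
    (c : K) {x : A} (hx : x ∈ I) : c • x ∈ I := by
  rw [Algebra.smul_def]
  exact I.mul_mem_left _ _ hx

theorem smul_mem_iff {K : Type*} [Field K] [Algebra K A] (I : TwoSidedIdeal A) {c : K}
    (hc : c ≠ 0) {x : A} : c • x ∈ I ↔ x ∈ I :=
  ⟨fun h => by simpa [smul_smul, inv_mul_cancel₀ hc] using I.smul_mem_of_mem c⁻¹ h,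
    I.smul_mem_of_mem c⟩

theorem map_mem_span_of_twisted_leibniz (σ : A →+* A) (d : A →+ A)
    (hd : ∀ x y, d (x * y) = d x * y + σ x * d y) {s : Set A}
    (hσ : ∀ x ∈ s, σ x ∈ span s) (hds : ∀ x ∈ s, d x ∈ span s) {x : A} (hx : x ∈ span s) :
    d x ∈ span s := by
  have hσ_span : ∀ y ∈ span s, σ y ∈ span s := fun y hy =>
    (mem_comap σ).mp (span_le.mpr (fun z hz => (mem_comap σ).mpr (hσ z hz)) hy)
  induction hx using span_induction with
  | mem x hx => exact hds x hx
  | zero => simp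
  | add x y _ _ hx hy => simpa using add_mem _ hx hy
  | neg x _ hx => simpa using neg_mem _ hx
  | left_absorb a x hx₀ hx =>
    rw [hd]
    exact add_mem _ (mul_mem_left _ _ _ hx₀) (mul_mem_left _ _ _ hx)
  | right_absorb b x hx₀ hx =>
    rw [hd]
    exact add_mem _ (mul_mem_right _ _ _ hx) (mul_mem_right _ _ _ (hσ_span x hx₀))

end TwoSidedIdeal

theorem Finset.sort_erase {α : Type*} [LinearOrder α] (s : Finset α) (a : α) :
    (s.erase a).sort (· ≤ ·) = (s.sort (· ≤ ·)).erase a := by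
  refine List.Perm.eq_of_pairwise' ((s.erase a).pairwise_sort (· ≤ ·))
    ((s.pairwise_sort (· ≤ ·)).sublist List.erase_sublist) ?_
  rw [← Multiset.coe_eq_coe, Finset.sort_eq, ← Multiset.coe_erase, Finset.sort_eq,
    Finset.erase_val]

section Grassmann

variable {K : Type} [Field K] {n : ℕ}

theorem bd_gen_mul (j : Fin n) (x : Grass K n) :
    bd K n (gen K n j * x) = x - gen K n j * bd K n x := by
  rw [bd, gen, ExteriorAlgebra.ι, CliffordAlgebra.contractLeft_ι_mul]
  simp

theorem gen_mul_gen_comm (a b : Fin n) : gen K n a * gen K n b = -(gen K n b * gen K n a) :=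
  eq_neg_of_add_eq_zero_left (ExteriorAlgebra.ι_add_mul_swap _ _)

@[simp]
theorem monList_cons (a : Fin n) (l : List (Fin n)) :
    monList K n (a :: l) = gen K n a * monList K n l := by
  simp [monList]

theorem involute_monList (l : List (Fin n)) :
    CliffordAlgebra.involute (monList K n l) = (-1 : K) ^ l.length • monList K n l := by
  have h := CliffordAlgebra.involute_prod_map_ι (Q := (0 : QuadraticForm K (Fin n → K)))
    (l.map fun i => Pi.single i 1)
  rw [List.length_map, List.map_map] at h
  exact h

theorem monList_eq_smul_gen_mul_eraseIdx (l : List (Fin n)) (k : ℕ) (hk : k < l.length) :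
    monList K n l = (-1 : K) ^ k • (gen K n l[k] * monList K n (l.eraseIdx k)) := by
  induction l generalizing k with
  | nil => simp at hk
  | cons a l ih =>
    cases k with
    | zero => simp
    | succ k =>
      rw [List.length_cons, Nat.add_lt_add_iff_right] at hk
      rw [monList_cons, ih k hk, List.getElem_cons_succ, List.eraseIdx_cons_succ, monList_cons,
        mul_smul_comm, ← mul_assoc, gen_mul_gen_comm, neg_mul, mul_assoc, pow_succ, mul_neg_one,
        smul_neg, neg_smul]

theorem bd_monList (l : List (Fin n)) :
    bd K n (monList K n l) =
      ∑ k ∈ Finset.range l.length, (-1 : K) ^ k • monList K n (l.eraseIdx k) := by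
  induction l with
  | nil => simp [monList, bd]
  | cons a l ih =>
    rw [monList_cons, bd_gen_mul, ih, List.length_cons, Finset.sum_range_succ', Finset.mul_sum,
      sub_eq_neg_add, ← Finset.sum_neg_distrib]
    simp [pow_succ]

theorem mon_eq_smul_gen_mul_mon_erase {X : Finset (Fin n)} {j : Fin n} (hj : j ∈ X) :
    mon K n X =
      (-1 : K) ^ (X.sort (· ≤ ·)).idxOf j • (gen K n j * mon K n (X.erase j)) := by
  have hlt : (X.sort (· ≤ ·)).idxOf j < (X.sort (· ≤ ·)).length :=
    List.idxOf_lt_length_of_mem ((X.mem_sort _).mpr hj)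
  rw [mon, monList_eq_smul_gen_mul_eraseIdx _ _ hlt, List.getElem_idxOf, mon, X.sort_erase,
    List.erase_eq_eraseIdx_of_idxOf rfl]

theorem bd_mon (X : Finset (Fin n)) :
    bd K n (mon K n X) =
      ∑ j ∈ X, (-1 : K) ^ (X.sort (· ≤ ·)).idxOf j • mon K n (X.erase j) := by
  set l := X.sort (· ≤ ·)
  have hmem : ∀ {j}, j ∈ l ↔ j ∈ X := X.mem_sort _
  rw [mon, bd_monList]
  symm
  refine Finset.sum_nbij l.idxOf (fun j hj => ?_) (fun a ha b _ hab => ?_) (fun k hk => ?_)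
    (fun j _ => ?_)
  · exact Finset.mem_range.mpr (List.idxOf_lt_length_of_mem (hmem.mpr hj))
  · exact (List.idxOf_inj (hmem.mpr ha)).mp hab
  · have hk := Finset.mem_range.mp hk
    exact ⟨l[k], hmem.mp (l.getElem_mem hk), (X.sort_nodup _).idxOf_getElem k hk⟩
  · rw [mon, X.sort_erase, List.erase_eq_eraseIdx_of_idxOf rfl]

theorem involute_bd_mon (X : Finset (Fin n)) :
    CliffordAlgebra.involute (bd K n (mon K n X)) =
      -((-1 : K) ^ X.card • bd K n (mon K n X)) := by
  rw [← neg_neg (CliffordAlgebra.involute _), bd, ← CliffordAlgebra.contractLeft_involute, ← bd,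
    mon, involute_monList, map_smul, Finset.length_sort]

theorem bd_mem_osIdeal {Xs : Set (Finset (Fin n))} {x : Grass K n} (hx : x ∈ OSIdeal K n Xs) :
    bd K n x ∈ OSIdeal K n Xs := by
  refine TwoSidedIdeal.map_mem_span_of_twisted_leibniz CliffordAlgebra.involute.toRingHom
    (bd K n).toAddMonoidHom (CliffordAlgebra.contractLeft_mul _) ?_ ?_ hx
  all_goals rintro _ ⟨Y, hY, rfl⟩
  · have hgen : bd K n (mon K n Y) ∈ OSIdeal K n Xs := TwoSidedIdeal.subset_span ⟨Y, hY, rfl⟩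
    change CliffordAlgebra.involute (bd K n (mon K n Y)) ∈ _
    rw [involute_bd_mon]
    exact neg_mem (TwoSidedIdeal.smul_mem_of_mem _ _ hgen)
  · change bd K n (bd K n (mon K n Y)) ∈ _
    rw [bd, CliffordAlgebra.contractLeft_contractLeft]
    exact zero_mem _

theorem mon_mem_osIdeal_of_erase {Xs : Set (Finset (Fin n))} {X : Finset (Fin n)} {j : Fin n}
    (hj : j ∈ X) (h : mon K n (X.erase j) ∈ OSIdeal K n Xs) : mon K n X ∈ OSIdeal K n Xs := by
  rw [mon_eq_smul_gen_mul_mon_erase hj]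
  exact TwoSidedIdeal.smul_mem_of_mem _ _ (TwoSidedIdeal.mul_mem_left _ _ _ h)

end Grassmann

/-- if `e_{X \ j} ∈ ℑ(𝔛)` for every `j ∈ X \ {i}`, then `e_{X \ i} ∈ ℑ(𝔛)`. -/
theorem stmt3 (K : Type) [Field K] (n : ℕ) (Xs : Set (Finset (Fin n)))
    (X : Finset (Fin n)) (hX : 2 ≤ X.card) (i : Fin n) (hi : i ∈ X)
    (h : ∀ j ∈ X \ {i}, mon K n (X \ {j}) ∈ OSIdeal K n Xs) :
    mon K n (X \ {i}) ∈ OSIdeal K n Xs := by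
  have h' : ∀ j ∈ X.erase i, mon K n (X.erase j) ∈ OSIdeal K n Xs := by
    simpa only [Finset.sdiff_singleton_eq_erase] using h
  obtain ⟨j, hjX, hji⟩ := Finset.exists_mem_ne hX i
  have hbd := bd_mem_osIdeal
    (mon_mem_osIdeal_of_erase hjX (h' j (Finset.mem_erase.mpr ⟨hji, hjX⟩)))
  rw [bd_mon, ← Finset.add_sum_erase _ _ hi] at hbd
  have hrest := (OSIdeal K n Xs).finsetSum_mem (X.erase i)
    (fun j => (-1 : K) ^ (X.sort (· ≤ ·)).idxOf j • mon K n (X.erase j))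
    fun j hj => TwoSidedIdeal.smul_mem_of_mem _ _ (h' j hj)
  have hterm := sub_mem hbd hrest
  rw [add_sub_cancel_right] at hterm
  rw [Finset.sdiff_singleton_eq_erase]
  exact (TwoSidedIdeal.smul_mem_iff _ (pow_ne_zero _ (neg_ne_zero.mpr one_ne_zero))).mp hterm
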